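/- Let A be a bounded linear operator on H. Then for every real number r ≥ 1, ber(A)^{2r} ≤ (1/2)·ber(A²)^r + (1/4)·ber(|A|^{2r} + |A*|^{2r}). -/

import Mathlib

set_option synthInstance.maxHeartbeats 1000000
set_option maxHeartbeats 1000000

open scoped NNReal
open ContinuousLinearMap

/-- The Berezin number of an operator `T`, relative to the family `k` of
(normalized reproducing kernel) vectors indexed by `Ω`. -/
noncomputable def ber {H : Type*} [NormedAddCommGroup H] [InnerProductSpace ℂ H]
    {Ω : Type*} (k : Ω → H) (T : H →L[ℂ] H) : ℝ :=
  ⨆ lam : Ω, ‖(inner ℂ (T (k lam)) (k lam) : ℂ)‖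

/-- The absolute value `|T| = (T*T)^(1/2)` of a bounded operator. -/
noncomputable def opAbs {H : Type*} [NormedAddCommGroup H] [InnerProductSpace ℂ H]
    [CompleteSpace H] (T : H →L[ℂ] H) : H →L[ℂ] H :=
  CFC.sqrt (adjoint T * T)

/-!
Buzano's inequality `|⟨u, x⟩⟨x, v⟩| ≤ (|⟨u, v⟩| + ‖u‖‖v‖) / 2`, applied to `u = A x` and
`v = A* x` for a unit vector `x`, gives `|⟨A x, x⟩|² ≤ (|⟨A² x, x⟩| + ‖A x‖‖A* x‖) / 2`.
Raising this to the power `r`, convexity of `t ↦ t ^ r` and AM-GM leave the terms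
`‖A x‖ ^ (2r) = ⟨A*A x, x⟩ ^ r` and `‖A* x‖ ^ (2r)`, which the Hölder–McCarthy inequality
`⟨T x, x⟩ ^ r ≤ ⟨T ^ r x, x⟩` bounds by `⟨|A| ^ (2r) x, x⟩` and `⟨|A*| ^ (2r) x, x⟩`.
-/

open RCLike
open scoped InnerProductSpace

theorem Real.rpow_tangent_le {s t p : ℝ} (hs : 0 < s) (ht : 0 ≤ t) (hp : 1 ≤ p) :
    s ^ p + p * s ^ (p - 1) * (t - s) ≤ t ^ p := by
  have h := one_add_mul_self_le_rpow_one_add (s := t / s - 1)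
    (by linarith [div_nonneg ht hs.le]) hp
  rw [add_sub_cancel, Real.div_rpow ht hs.le, le_div_iff₀ (by positivity)] at h
  calc s ^ p + p * s ^ (p - 1) * (t - s) = (1 + p * (t / s - 1)) * s ^ p := by
        rw [Real.rpow_sub_one hs.ne']; field_simp
    _ ≤ t ^ p := h

theorem Real.rpow_two_mul_le_of_sq_le {a b c d r : ℝ} (ha : 0 ≤ a) (hb : 0 ≤ b) (hc : 0 ≤ c)
    (hd : 0 ≤ d) (hr : 1 ≤ r) (h : a ^ 2 ≤ (b + c * d) / 2) :
    a ^ (2 * r) ≤ 1 / 2 * b ^ r + 1 / 4 * (c ^ (2 * r) + d ^ (2 * r)) := by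
  have hsq {u : ℝ} (hu : 0 ≤ u) : u ^ (2 * r) = (u ^ r) ^ 2 := by
    rw [mul_comm, Real.rpow_mul hu, Real.rpow_two]
  have hconv : ((b + c * d) / 2) ^ r ≤ 1 / 2 * b ^ r + 1 / 2 * (c * d) ^ r := by
    have := (convexOn_rpow hr).2 (Set.mem_Ici.2 hb) (Set.mem_Ici.2 (mul_nonneg hc hd))
      (by norm_num : (0 : ℝ) ≤ 1 / 2) (by norm_num : (0 : ℝ) ≤ 1 / 2) (by norm_num)
    rwa [smul_eq_mul, smul_eq_mul, smul_eq_mul, smul_eq_mul, ← mul_add, one_div_mul_eq_div]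
      at this
  have hamgm : (c * d) ^ r ≤ ((c ^ r) ^ 2 + (d ^ r) ^ 2) / 2 := by
    rw [Real.mul_rpow hc hd]
    nlinarith [sq_nonneg (c ^ r - d ^ r)]
  calc a ^ (2 * r) = (a ^ 2) ^ r := by rw [Real.rpow_mul ha]; norm_cast
    _ ≤ ((b + c * d) / 2) ^ r := by gcongr
    _ ≤ 1 / 2 * b ^ r + 1 / 4 * (c ^ (2 * r) + d ^ (2 * r)) := by
        rw [hsq hc, hsq hd]; linarith

section InnerProductSpace

variable {𝕜 E : Type*} [RCLike 𝕜] [NormedAddCommGroup E] [InnerProductSpace 𝕜 E]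

/-- Buzano's inequality. -/
theorem norm_inner_mul_inner_le_of_norm_eq_one {x : E} (hx : ‖x‖ = 1) (u v : E) :
    ‖⟪u, x⟫_𝕜 * ⟪x, v⟫_𝕜‖ ≤ (‖⟪u, v⟫_𝕜‖ + ‖u‖ * ‖v‖) / 2 := by
  -- the reflection `R` in the line through `x` is an isometry with `R u = 2 ⟪x, u⟫ x - u`
  set R := (𝕜 ∙ x).reflection
  have hR : ⟪R u, v⟫_𝕜 = 2 * (⟪u, x⟫_𝕜 * ⟪x, v⟫_𝕜) - ⟪u, v⟫_𝕜 := by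
    simp only [R, Submodule.reflection_apply, Submodule.starProjection_singleton, hx,
      inner_sub_left, inner_smul_left, two_smul, inner_add_left, one_pow, map_one, div_one,
      inner_conj_symm]
    ring
  calc ‖⟪u, x⟫_𝕜 * ⟪x, v⟫_𝕜‖ = ‖⟪R u, v⟫_𝕜 + ⟪u, v⟫_𝕜‖ / 2 := by
        rw [hR, sub_add_cancel, norm_mul (2 : 𝕜), RCLike.norm_two, norm_mul]; ring
    _ ≤ (‖⟪R u, v⟫_𝕜‖ + ‖⟪u, v⟫_𝕜‖) / 2 := by gcongr; exact norm_add_le _ _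
    _ ≤ (‖R u‖ * ‖v‖ + ‖⟪u, v⟫_𝕜‖) / 2 := by gcongr; exact norm_inner_le_norm _ _
    _ = (‖⟪u, v⟫_𝕜‖ + ‖u‖ * ‖v‖) / 2 := by rw [LinearIsometryEquiv.norm_map]; ring

theorem ContinuousLinearMap.norm_inner_apply_sq_le [CompleteSpace E] (A : E →L[𝕜] E) {x : E}
    (hx : ‖x‖ = 1) :
    ‖⟪A x, x⟫_𝕜‖ ^ 2 ≤ (‖⟪(A * A) x, x⟫_𝕜‖ + ‖A x‖ * ‖adjoint A x‖) / 2 := by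
  have := norm_inner_mul_inner_le_of_norm_eq_one (𝕜 := 𝕜) hx (A x) (adjoint A x)
  rwa [adjoint_inner_right, adjoint_inner_right, norm_mul, ← sq] at this

theorem ContinuousLinearMap.re_inner_le_re_inner_of_le {S T : E →L[𝕜] E} (h : S ≤ T) (x : E) :
    re ⟪S x, x⟫_𝕜 ≤ re ⟪T x, x⟫_𝕜 := by
  have := ((le_def S T).1 h).re_inner_nonneg_left x
  rwa [sub_apply, inner_sub_left, map_sub, sub_nonneg] at this

end InnerProductSpace

section Operator

variable {H : Type*} [NormedAddCommGroup H] [InnerProductSpace ℂ H]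

theorem ContinuousLinearMap.re_inner_algebraMap_add_smul_apply (c b : ℝ) (T : H →L[ℂ] H)
    (x : H) :
    re ⟪(algebraMap ℝ (H →L[ℂ] H) c + b • T) x, x⟫_ℂ = c * ‖x‖ ^ 2 + b * re ⟪T x, x⟫_ℂ := by
  simp [Algebra.algebraMap_eq_smul_one, ← Complex.ofReal_pow]

variable [CompleteSpace H]

/-- Jensen's inequality for the state `T ↦ ⟪T x, x⟫`, through a supporting line of `f`. -/
theorem ContinuousLinearMap.le_re_inner_cfc_of_le {T : H →L[ℂ] H} {f : ℝ → ℝ}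
    (hf : ContinuousOn f (spectrum ℝ T)) (hT : IsSelfAdjoint T) {x : H} (hx : ‖x‖ = 1) {a b : ℝ}
    (h : ∀ t ∈ spectrum ℝ T, a + b * (t - re ⟪T x, x⟫_ℂ) ≤ f t) :
    a ≤ re ⟪cfc f T x, x⟫_ℂ := by
  set s := re ⟪T x, x⟫_ℂ
  have hline : cfc (fun t : ℝ => (a - b * s) + b * t) T = algebraMap ℝ _ (a - b * s) + b • T := by
    rw [cfc_add .., cfc_const .., cfc_const_mul .., cfc_id' ..]
  calc a = re ⟪cfc (fun t : ℝ => (a - b * s) + b * t) T x, x⟫_ℂ := by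
        rw [hline, re_inner_algebraMap_add_smul_apply, hx]; ring
    _ ≤ re ⟪cfc f T x, x⟫_ℂ :=
        re_inner_le_re_inner_of_le (cfc_mono fun t ht => by linarith [h t ht]) x

/-- The Hölder–McCarthy inequality. -/
theorem ContinuousLinearMap.re_inner_rpow_le {T : H →L[ℂ] H} (hT : 0 ≤ T) {p : ℝ} (hp : 1 ≤ p)
    {x : H} (hx : ‖x‖ = 1) :
    re ⟪T x, x⟫_ℂ ^ p ≤ re ⟪(T ^ p) x, x⟫_ℂ := by
  obtain hs | hs := (((nonneg_iff_isPositive T).1 hT).re_inner_nonneg_left x).eq_or_lt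
  · rw [← hs, Real.zero_rpow (by positivity)]
    exact ((nonneg_iff_isPositive _).1 CFC.rpow_nonneg).re_inner_nonneg_left x
  rw [CFC.rpow_eq_cfc_real hT]
  exact le_re_inner_cfc_of_le (by fun_prop (disch := positivity)) hT.isSelfAdjoint hx
    fun t ht => Real.rpow_tangent_le hs (spectrum_nonneg_of_nonneg hT ht) hp

theorem ContinuousLinearMap.adjoint_mul_self_nonneg (T : H →L[ℂ] H) : 0 ≤ adjoint T * T := by
  rw [← star_eq_adjoint]
  exact star_mul_self_nonneg T

theorem opAbs_rpow_two_mul (T : H →L[ℂ] H) {r : ℝ} (hr : 0 ≤ r) :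
    CFC.rpow (opAbs T) (2 * r) = (adjoint T * T) ^ r := by
  rw [opAbs, CFC.sqrt_eq_rpow, CFC.rpow_eq_pow, CFC.rpow_rpow_of_exponent_nonneg _ _ _
    (by norm_num) (by positivity) T.adjoint_mul_self_nonneg, show 1 / 2 * (2 * r) = r by ring]

theorem ContinuousLinearMap.norm_apply_rpow_two_mul_le (T : H →L[ℂ] H) {r : ℝ} (hr : 1 ≤ r)
    {x : H} (hx : ‖x‖ = 1) :
    ‖T x‖ ^ (2 * r) ≤ re ⟪CFC.rpow (opAbs T) (2 * r) x, x⟫_ℂ := by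
  have hnorm : ‖T x‖ ^ 2 = re ⟪(adjoint T * T) x, x⟫_ℂ := by
    rw [mul_apply_eq_comp, adjoint_inner_left, inner_self_eq_norm_sq]
  rw [opAbs_rpow_two_mul T (by positivity), Real.rpow_mul (norm_nonneg _)]
  norm_cast
  rw [hnorm]
  exact re_inner_rpow_le T.adjoint_mul_self_nonneg hr hx

end Operator

section Berezin

variable {H : Type*} [NormedAddCommGroup H] [InnerProductSpace ℂ H] {Ω : Type*}

theorem ber_nonneg (k : Ω → H) (T : H →L[ℂ] H) : 0 ≤ ber k T :=
  Real.iSup_nonneg fun _ => norm_nonneg _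

theorem norm_inner_le_ber {k : Ω → H} (hk : ∀ lam, ‖k lam‖ = 1) (T : H →L[ℂ] H) (lam : Ω) :
    ‖⟪T (k lam), k lam⟫_ℂ‖ ≤ ber k T := by
  refine le_ciSup (f := fun lam => ‖⟪T (k lam), k lam⟫_ℂ‖) ⟨‖T‖, ?_⟩ lam
  rintro _ ⟨mu, rfl⟩
  simpa [hk] using (norm_inner_le_norm (T (k mu)) (k mu)).trans
    (mul_le_mul_of_nonneg_right (T.le_opNorm _) (norm_nonneg _))

theorem re_inner_le_ber {k : Ω → H} (hk : ∀ lam, ‖k lam‖ = 1) (T : H →L[ℂ] H) (lam : Ω) :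
    re ⟪T (k lam), k lam⟫_ℂ ≤ ber k T :=
  (re_le_norm _).trans (norm_inner_le_ber hk T lam)

theorem ber_rpow_le {k : Ω → H} {T : H →L[ℂ] H} {p C : ℝ} (hp : 0 < p) (hC : 0 ≤ C)
    (h : ∀ lam, ‖⟪T (k lam), k lam⟫_ℂ‖ ^ p ≤ C) : ber k T ^ p ≤ C :=
  (Real.le_rpow_inv_iff_of_pos (ber_nonneg k T) hC hp).1 <| Real.iSup_le
    (fun lam => (Real.le_rpow_inv_iff_of_pos (norm_nonneg _) hC hp).2 (h lam)) (by positivity)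

end Berezin

theorem berezin_power_inequality_alpha_one_general
    {H : Type*} [NormedAddCommGroup H] [InnerProductSpace ℂ H] [CompleteSpace H]
    {Ω : Type*} (k : Ω → H) (hk : ∀ lam, ‖k lam‖ = 1)
    (A : H →L[ℂ] H) (r : ℝ) (hr : 1 ≤ r) :
    ber k A ^ (2 * r) ≤
      (1 / 2 : ℝ) * ber k (A * A) ^ r
        + (1 / 4 : ℝ) * ber k (CFC.rpow (opAbs A) (2 * r)
            + CFC.rpow (opAbs (adjoint A)) (2 * r)) := by
  refine ber_rpow_le (by positivity) (add_nonneg (mul_nonneg (by norm_num)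
    (Real.rpow_nonneg (ber_nonneg k _) r)) (mul_nonneg (by norm_num) (ber_nonneg k _))) ?_
  intro lam
  have hx := hk lam
  calc ‖⟪A (k lam), k lam⟫_ℂ‖ ^ (2 * r)
      ≤ 1 / 2 * ‖⟪(A * A) (k lam), k lam⟫_ℂ‖ ^ r
          + 1 / 4 * (‖A (k lam)‖ ^ (2 * r) + ‖adjoint A (k lam)‖ ^ (2 * r)) :=
        Real.rpow_two_mul_le_of_sq_le (norm_nonneg _) (norm_nonneg _) (norm_nonneg _)
          (norm_nonneg _) hr (A.norm_inner_apply_sq_le hx)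
    _ ≤ 1 / 2 * ber k (A * A) ^ r + 1 / 4 * re ⟪(CFC.rpow (opAbs A) (2 * r)
          + CFC.rpow (opAbs (adjoint A)) (2 * r)) (k lam), k lam⟫_ℂ := by
        rw [add_apply, inner_add_left, map_add]
        gcongr
        · exact norm_inner_le_ber hk _ lam
        · exact A.norm_apply_rpow_two_mul_le hr hx
        · exact (adjoint A).norm_apply_rpow_two_mul_le hr hx
    _ ≤ _ := by
        gcongr
        exact re_inner_le_ber hk _ lam

theorem berezin_power_inequality_alpha_one
    {H : Type*} [NormedAddCommGroup H] [InnerProductSpace ℂ H] [CompleteSpace H]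
    {Ω : Type*} [Nonempty Ω] (k : Ω → H) (hk : ∀ lam, ‖k lam‖ = 1)
    (A : H →L[ℂ] H) (r : ℝ) (hr : 1 ≤ r) :
    ber k A ^ (2 * r) ≤
      (1 / 2 : ℝ) * ber k (A * A) ^ r
        + (1 / 4 : ℝ) * ber k (CFC.rpow (opAbs A) (2 * r)
            + CFC.rpow (opAbs (adjoint A)) (2 * r)) :=
  berezin_power_inequality_alpha_one_general k hk A r hr
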